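/- arXiv:1002.2535 — 3 statements merged into one kernel-verified Lean document; each statement's English description precedes it below -/
import Mathlib

section
/- Let A₁ be a semisimple (diagonalizable) n×n complex matrix with distinct eigenvalues d₁,...,d_k of multiplicities n₁,...,n_k, and let A₀ be any n×n complex matrix, written in a basis diagonalizing A₁ in block form with diagonal blocks A₀^{[l,l]} of size n_l. Then the dimension of the space of pairs (C₁, C₀) of n×n matrices satisfying A₁C₁ = C₁A₁ and A₁C₀ − C₀A₁ + A₀C₁ − C₁A₀ = 0 equals Σ_{l=1}^{k} ( n_l² + dim Z(A₀^{[l,l]}) ), where Z(X) denotes the centralizer {Y : XY = YX} of X. -/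
open Matrix Finset

/-- The centralizer `Z(X) = {Y | XY = YX}` as a submodule of matrices. -/
noncomputable def matrixCentralizer {m : Type*} [Fintype m] (X : Matrix m m ℂ) :
    Submodule ℂ (Matrix m m ℂ) where
  carrier := {Y | X * Y = Y * X}
  add_mem' := by
    intro a b ha hb
    simp only [Set.mem_setOf_eq] at *
    rw [mul_add, add_mul, ha, hb]
  zero_mem' := by simp
  smul_mem' := by
    intro c a ha
    simp only [Set.mem_setOf_eq] at *
    rw [Matrix.mul_smul, Matrix.smul_mul, ha]

section Aux

variable {k : ℕ} {nl : Fin k → ℕ}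

/-- Left multiplication by a block diagonal matrix on a diagonal block. -/
theorem mul_bd_apply (A : Matrix ((l : Fin k) × Fin (nl l)) ((l : Fin k) × Fin (nl l)) ℂ)
    (B : ∀ l, Matrix (Fin (nl l)) (Fin (nl l)) ℂ) (l : Fin k) (a b : Fin (nl l)) :
    (A * blockDiagonal' B) ⟨l, a⟩ ⟨l, b⟩ =
      ((Matrix.of fun a b : Fin (nl l) => A ⟨l, a⟩ ⟨l, b⟩) * B l) a b := by
  rw [Matrix.mul_apply, Matrix.mul_apply, ← Finset.univ_sigma_univ, Finset.sum_sigma]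
  rw [Fintype.sum_eq_single l]
  · simp
  · intro i hi
    apply Finset.sum_eq_zero
    intro c _
    rw [blockDiagonal'_apply_ne _ _ _ hi, mul_zero]

theorem bd_mul_apply (A : Matrix ((l : Fin k) × Fin (nl l)) ((l : Fin k) × Fin (nl l)) ℂ)
    (B : ∀ l, Matrix (Fin (nl l)) (Fin (nl l)) ℂ) (l : Fin k) (a b : Fin (nl l)) :
    (blockDiagonal' B * A) ⟨l, a⟩ ⟨l, b⟩ =
      (B l * (Matrix.of fun a b : Fin (nl l) => A ⟨l, a⟩ ⟨l, b⟩)) a b := by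
  rw [Matrix.mul_apply, Matrix.mul_apply, ← Finset.univ_sigma_univ, Finset.sum_sigma]
  rw [Fintype.sum_eq_single l]
  · simp
  · intro i hi
    apply Finset.sum_eq_zero
    intro c _
    rw [blockDiagonal'_apply_ne _ _ _ (Ne.symm hi), zero_mul]

end Aux

/-- Dimension of the space of pairs `(C₁, C₀)` with `A₁C₁ = C₁A₁` and
`A₁C₀ − C₀A₁ + A₀C₁ − C₁A₀ = 0`, for `A₁` diagonal with distinct eigenvalues
`d_l` of multiplicities `n_l`: it equals `Σ_l (n_l² + dim Z(A₀^{[l,l]}))`. -/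
theorem dim_pair_space (k : ℕ) (hk : 0 < k) (nl : Fin k → ℕ) (hnl : ∀ l, 0 < nl l)
    (d : Fin k → ℂ) (hd : Function.Injective d)
    (A0 A1 : Matrix ((l : Fin k) × Fin (nl l)) ((l : Fin k) × Fin (nl l)) ℂ)
    (hA1 : A1 = Matrix.diagonal (fun p => d p.1))
    (W : Submodule ℂ (Matrix ((l : Fin k) × Fin (nl l)) ((l : Fin k) × Fin (nl l)) ℂ ×
      Matrix ((l : Fin k) × Fin (nl l)) ((l : Fin k) × Fin (nl l)) ℂ))
    (hW : (W : Set (Matrix ((l : Fin k) × Fin (nl l)) ((l : Fin k) × Fin (nl l)) ℂ ×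
        Matrix ((l : Fin k) × Fin (nl l)) ((l : Fin k) × Fin (nl l)) ℂ)) =
      {p : Matrix ((l : Fin k) × Fin (nl l)) ((l : Fin k) × Fin (nl l)) ℂ ×
          Matrix ((l : Fin k) × Fin (nl l)) ((l : Fin k) × Fin (nl l)) ℂ |
        A1 * p.1 = p.1 * A1 ∧ A1 * p.2 - p.2 * A1 + A0 * p.1 - p.1 * A0 = 0}) :
    Module.finrank ℂ W =
      ∑ l : Fin k, ((nl l) ^ 2 +
        Module.finrank ℂ (matrixCentralizer
          (Matrix.of fun a b : Fin (nl l) => A0 ⟨l, a⟩ ⟨l, b⟩))) := by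
  subst hA1
  -- membership criterion
  have hmem : ∀ p : Matrix ((l : Fin k) × Fin (nl l)) ((l : Fin k) × Fin (nl l)) ℂ × Matrix ((l : Fin k) × Fin (nl l)) ((l : Fin k) × Fin (nl l)) ℂ, p ∈ W ↔
      (Matrix.diagonal (fun p : ((l : Fin k) × Fin (nl l)) => d p.1) * p.1 = p.1 * Matrix.diagonal (fun p : ((l : Fin k) × Fin (nl l)) => d p.1) ∧
        Matrix.diagonal (fun p : ((l : Fin k) × Fin (nl l)) => d p.1) * p.2 - p.2 * Matrix.diagonal (fun p : ((l : Fin k) × Fin (nl l)) => d p.1)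
          + A0 * p.1 - p.1 * A0 = 0) := by
    intro p
    rw [← SetLike.mem_coe, hW]
    rfl
  have hdne : ∀ {i j : Fin k}, i ≠ j → d i - d j ≠ 0 := fun {i j} hij =>
    sub_ne_zero.mpr (fun h => hij (hd h))
  -- the correction term
  set F : Matrix ((l : Fin k) × Fin (nl l)) ((l : Fin k) × Fin (nl l)) ℂ → Matrix ((l : Fin k) × Fin (nl l)) ((l : Fin k) × Fin (nl l)) ℂ := fun C => Matrix.of fun p q =>
    if p.1 = q.1 then 0 else ((C * A0 - A0 * C) p q) / (d p.1 - d q.1) with hF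
  have hFadd : ∀ X Y, F (X + Y) = F X + F Y := by
    intro X Y
    ext p q
    simp only [hF, Matrix.of_apply, Matrix.add_apply]
    split
    · simp
    · simp only [Matrix.sub_apply, Matrix.add_apply, Matrix.add_mul, Matrix.mul_add]
      ring
  have hFsmul : ∀ (c : ℂ) X, F (c • X) = c • F X := by
    intro c X
    ext p q
    simp only [hF, Matrix.of_apply, Matrix.smul_apply]
    split
    · simp
    · simp only [Matrix.sub_apply, Matrix.smul_apply, Matrix.smul_mul, Matrix.mul_smul,
        smul_eq_mul]
      ring
  -- the map T → pairs
  set ψ : (((l : Fin k) → (matrixCentralizer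
      (Matrix.of fun a b : Fin (nl l) => A0 ⟨l, a⟩ ⟨l, b⟩))) ×
    ((l : Fin k) → Matrix (Fin (nl l)) (Fin (nl l)) ℂ)) →ₗ[ℂ] Matrix ((l : Fin k) × Fin (nl l)) ((l : Fin k) × Fin (nl l)) ℂ × Matrix ((l : Fin k) × Fin (nl l)) ((l : Fin k) × Fin (nl l)) ℂ :=
    { toFun := fun BD =>
        (blockDiagonal' (fun l => (BD.1 l : Matrix (Fin (nl l)) (Fin (nl l)) ℂ)),
          blockDiagonal' BD.2 +
            F (blockDiagonal' (fun l => (BD.1 l : Matrix (Fin (nl l)) (Fin (nl l)) ℂ))))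
      map_add' := by
        intro x y
        have e1 : (fun l => ((x + y).1 l : Matrix (Fin (nl l)) (Fin (nl l)) ℂ)) =
            (fun l => (x.1 l : Matrix (Fin (nl l)) (Fin (nl l)) ℂ)) +
            (fun l => (y.1 l : Matrix (Fin (nl l)) (Fin (nl l)) ℂ)) := rfl
        have e2 : (x + y).2 = x.2 + y.2 := rfl
        refine Prod.ext ?_ ?_
        · show blockDiagonal' (fun l => ((x + y).1 l : Matrix (Fin (nl l)) (Fin (nl l)) ℂ)) =
            blockDiagonal' (fun l => (x.1 l : Matrix (Fin (nl l)) (Fin (nl l)) ℂ)) +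
            blockDiagonal' (fun l => (y.1 l : Matrix (Fin (nl l)) (Fin (nl l)) ℂ))
          rw [e1, Matrix.blockDiagonal'_add]
        · show blockDiagonal' (x + y).2 +
              F (blockDiagonal' (fun l => ((x + y).1 l : Matrix (Fin (nl l)) (Fin (nl l)) ℂ))) =
            (blockDiagonal' x.2 +
              F (blockDiagonal' (fun l => (x.1 l : Matrix (Fin (nl l)) (Fin (nl l)) ℂ)))) +
            (blockDiagonal' y.2 +
              F (blockDiagonal' (fun l => (y.1 l : Matrix (Fin (nl l)) (Fin (nl l)) ℂ))))
          rw [e1, e2, Matrix.blockDiagonal'_add, Matrix.blockDiagonal'_add, hFadd]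
          abel
      map_smul' := by
        intro c x
        have e1 : (fun l => ((c • x).1 l : Matrix (Fin (nl l)) (Fin (nl l)) ℂ)) =
            c • (fun l => (x.1 l : Matrix (Fin (nl l)) (Fin (nl l)) ℂ)) := rfl
        have e2 : (c • x).2 = c • x.2 := rfl
        refine Prod.ext ?_ ?_
        · show blockDiagonal' (fun l => ((c • x).1 l : Matrix (Fin (nl l)) (Fin (nl l)) ℂ)) =
            c • blockDiagonal' (fun l => (x.1 l : Matrix (Fin (nl l)) (Fin (nl l)) ℂ))
          rw [e1, Matrix.blockDiagonal'_smul]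
        · show blockDiagonal' (c • x).2 +
              F (blockDiagonal' (fun l => ((c • x).1 l : Matrix (Fin (nl l)) (Fin (nl l)) ℂ))) =
            c • (blockDiagonal' x.2 +
              F (blockDiagonal' (fun l => (x.1 l : Matrix (Fin (nl l)) (Fin (nl l)) ℂ))))
          rw [e1, e2, Matrix.blockDiagonal'_smul, Matrix.blockDiagonal'_smul, hFsmul, smul_add]
        } with hψ
  -- injectivity
  have hinj : Function.Injective ψ := by
    rw [injective_iff_map_eq_zero]
    rintro ⟨B, D⟩ h
    rw [Prod.ext_iff] at h
    obtain ⟨h1', h2'⟩ := h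
    have h1 : blockDiagonal' (fun l => (B l : Matrix (Fin (nl l)) (Fin (nl l)) ℂ)) = 0 := h1'
    have h2 : blockDiagonal' D +
        F (blockDiagonal' (fun l => (B l : Matrix (Fin (nl l)) (Fin (nl l)) ℂ))) = 0 := h2'
    have hB : ∀ l, (B l : Matrix (Fin (nl l)) (Fin (nl l)) ℂ) = 0 := by
      intro l
      ext a b
      have := congrFun (congrFun h1 ⟨l, a⟩) ⟨l, b⟩
      simpa using this
    have hF0 : F (blockDiagonal' (fun l => (B l : Matrix (Fin (nl l)) (Fin (nl l)) ℂ))) = 0 := by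
      have : blockDiagonal' (fun l => (B l : Matrix (Fin (nl l)) (Fin (nl l)) ℂ)) = 0 := by
        ext ⟨i, a⟩ ⟨j, b⟩
        rcases eq_or_ne i j with rfl | hij
        · simp [hB]
        · simp [blockDiagonal'_apply_ne _ _ _ hij]
      rw [this]
      ext p q
      simp only [hF, Matrix.of_apply]
      split <;> simp
    rw [hF0, add_zero] at h2
    have hD : ∀ l, D l = 0 := by
      intro l
      ext a b
      have := congrFun (congrFun h2 ⟨l, a⟩) ⟨l, b⟩
      simpa using this
    ext l a b
    · exact congrFun (congrFun (hB l) a) b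
    · exact congrFun (congrFun (hD l) a) b
  -- range is W
  have hrange : LinearMap.range ψ = W := by
    apply le_antisymm
    · rintro x ⟨⟨B, D⟩, rfl⟩
      rw [hmem]
      constructor
      · ext ⟨i, a⟩ ⟨j, b⟩
        rw [Matrix.diagonal_mul, Matrix.mul_diagonal]
        rcases eq_or_ne i j with rfl | hij
        · exact mul_comm _ _
        · rw [show (ψ (B, D)).1 = blockDiagonal'
            (fun l => (B l : Matrix (Fin (nl l)) (Fin (nl l)) ℂ)) from rfl,
            blockDiagonal'_apply_ne _ _ _ hij]
          simp
      · ext ⟨i, a⟩ ⟨j, b⟩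
        have hC1 : (ψ (B, D)).1 = blockDiagonal'
            (fun l => (B l : Matrix (Fin (nl l)) (Fin (nl l)) ℂ)) := rfl
        have hC0 : (ψ (B, D)).2 = blockDiagonal' D + F (blockDiagonal'
            (fun l => (B l : Matrix (Fin (nl l)) (Fin (nl l)) ℂ))) := rfl
        rw [hC1, hC0]
        simp only [Matrix.add_apply, Matrix.sub_apply, Matrix.diagonal_mul, Matrix.mul_diagonal, Matrix.zero_apply]
        rcases eq_or_ne i j with rfl | hij
        · have hFd : F (blockDiagonal' (fun l => (B l : Matrix (Fin (nl l)) (Fin (nl l)) ℂ)))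
              ⟨i, a⟩ ⟨i, b⟩ = 0 := by
            simp [hF]
          rw [hFd, add_zero]
          have hcomm := (B i).2
          simp only [matrixCentralizer, Submodule.mem_mk, AddSubmonoid.mem_mk,
            AddSubsemigroup.mem_mk, Set.mem_setOf_eq] at hcomm
          rw [mul_bd_apply, bd_mul_apply, ← hcomm]
          ring
        · have hFd : F (blockDiagonal' (fun l => (B l : Matrix (Fin (nl l)) (Fin (nl l)) ℂ)))
              ⟨i, a⟩ ⟨j, b⟩ =
              ((blockDiagonal' (fun l => (B l : Matrix (Fin (nl l)) (Fin (nl l)) ℂ)) * A0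
                - A0 * blockDiagonal' (fun l => (B l : Matrix (Fin (nl l)) (Fin (nl l)) ℂ)))
                ⟨i, a⟩ ⟨j, b⟩) / (d i - d j) := by
            simp [hF, hij]
          rw [blockDiagonal'_apply_ne _ _ _ hij, zero_add, hFd, Matrix.sub_apply]
          field_simp [hdne hij]
          ring
    · intro x hx
      rw [hmem] at hx
      obtain ⟨hx1, hx2⟩ := hx
      -- off-diagonal blocks of x.1 vanish
      have hoff : ∀ (i j : Fin k) (a : Fin (nl i)) (b : Fin (nl j)), i ≠ j →
          x.1 ⟨i, a⟩ ⟨j, b⟩ = 0 := by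
        intro i j a b hij
        have := congrFun (congrFun hx1 ⟨i, a⟩) ⟨j, b⟩
        rw [Matrix.diagonal_mul, Matrix.mul_diagonal] at this
        have h2 : (d i - d j) * x.1 ⟨i, a⟩ ⟨j, b⟩ = 0 := by linear_combination this
        exact (mul_eq_zero.mp h2).resolve_left (hdne hij)
      -- x.1 is block diagonal
      have hbd : blockDiagonal' (fun l => Matrix.of fun a b : Fin (nl l) =>
          x.1 ⟨l, a⟩ ⟨l, b⟩) = x.1 := by
        ext ⟨i, a⟩ ⟨j, b⟩
        rcases eq_or_ne i j with rfl | hij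
        · simp
        · rw [blockDiagonal'_apply_ne _ _ _ hij, hoff i j a b hij]
      have hx2' : ∀ (p q : (l : Fin k) × Fin (nl l)),
          d p.1 * x.2 p q - x.2 p q * d q.1 + (A0 * x.1) p q - (x.1 * A0) p q = 0 := by
        intro p q
        have := congrFun (congrFun hx2 p) q
        simp only [Matrix.add_apply, Matrix.sub_apply, Matrix.diagonal_mul, Matrix.mul_diagonal,
          Matrix.zero_apply] at this
        linear_combination this
      -- diagonal blocks of x.1 are in the centralizers
      have hcent : ∀ l, (Matrix.of fun a b : Fin (nl l) => x.1 ⟨l, a⟩ ⟨l, b⟩) ∈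
          matrixCentralizer (Matrix.of fun a b : Fin (nl l) => A0 ⟨l, a⟩ ⟨l, b⟩) := by
        intro l
        show _ * _ = _ * _
        ext a b
        have h1 := hx2' ⟨l, a⟩ ⟨l, b⟩
        rw [← hbd, mul_bd_apply, bd_mul_apply] at h1
        linear_combination h1
      refine ⟨(fun l => ⟨_, hcent l⟩, fun l => Matrix.of fun a b : Fin (nl l) =>
        x.2 ⟨l, a⟩ ⟨l, b⟩), ?_⟩
      -- show ψ of these blocks equals x
      have hψ1 : (ψ (fun l => (⟨_, hcent l⟩ : matrixCentralizer
            (Matrix.of fun a b : Fin (nl l) => A0 ⟨l, a⟩ ⟨l, b⟩)),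
          fun l => Matrix.of fun a b : Fin (nl l) => x.2 ⟨l, a⟩ ⟨l, b⟩)).1 =
          blockDiagonal' (fun l => Matrix.of fun a b : Fin (nl l) => x.1 ⟨l, a⟩ ⟨l, b⟩) := rfl
      have hψ2 : (ψ (fun l => (⟨_, hcent l⟩ : matrixCentralizer
            (Matrix.of fun a b : Fin (nl l) => A0 ⟨l, a⟩ ⟨l, b⟩)),
          fun l => Matrix.of fun a b : Fin (nl l) => x.2 ⟨l, a⟩ ⟨l, b⟩)).2 =
          blockDiagonal' (fun l => Matrix.of fun a b : Fin (nl l) => x.2 ⟨l, a⟩ ⟨l, b⟩) +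
          F (blockDiagonal' (fun l => Matrix.of fun a b : Fin (nl l) =>
            x.1 ⟨l, a⟩ ⟨l, b⟩)) := rfl
      refine Prod.ext ?_ ?_
      · rw [hψ1, hbd]
      · rw [hψ2, hbd]
        ext ⟨i, a⟩ ⟨j, b⟩
        rw [Matrix.add_apply]
        rcases eq_or_ne i j with rfl | hij
        · have : F x.1 ⟨i, a⟩ ⟨i, b⟩ = 0 := by simp [hF]
          rw [this, add_zero, blockDiagonal'_apply_eq]
          rfl
        · have hFv : F x.1 ⟨i, a⟩ ⟨j, b⟩ =
              ((x.1 * A0 - A0 * x.1) ⟨i, a⟩ ⟨j, b⟩) / (d i - d j) := by simp [hF, hij]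
          rw [blockDiagonal'_apply_ne _ _ _ hij, zero_add, hFv, Matrix.sub_apply]
          have h2 := hx2' ⟨i, a⟩ ⟨j, b⟩
          field_simp [hdne hij]
          linear_combination -h2
  -- conclude by computing the dimension of T
  have hfr : Module.finrank ℂ W = Module.finrank ℂ (((l : Fin k) → (matrixCentralizer
      (Matrix.of fun a b : Fin (nl l) => A0 ⟨l, a⟩ ⟨l, b⟩))) ×
    ((l : Fin k) → Matrix (Fin (nl l)) (Fin (nl l)) ℂ)) := by
    rw [← hrange]
    exact ((LinearEquiv.ofInjective ψ hinj).finrank_eq).symm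
  rw [hfr, Module.finrank_prod, Module.finrank_pi_fintype, Module.finrank_pi_fintype,
    ← Finset.sum_add_distrib]
  refine Finset.sum_congr rfl fun l _ => ?_
  rw [Module.finrank_matrix]
  simp [sq, add_comm]
end

section
/- Let a₁ be a nonzero real (or complex) number and let p₁, p₂ ≥ 1 be integers with p₂ ≥ p₁. Suppose positive rationals satisfy x(p₁+1) = y(p₂+1) = (1 − 1/q)(x·p₁ + y·p₂) for some integer q ≥ 2 and positive rationals x ≤ y. Then q ≥ 3; moreover if q = 3 then (p₂, p₁) ∈ {(2,5), (3,3)} up to the derived relation y = 2x or y = x respectively, and if q ≥ 4 then p₂ ≤ q/(q−2). -/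
/-- Combinatorial analysis in the case `k⁽⁰⁾ = 2` of the classification of
index-of-rigidity-zero patterns. -/
theorem case_k0_two (a₁ : ℂ) (ha₁ : a₁ ≠ 0)
    (p₁ p₂ q : ℤ) (hp₁ : 1 ≤ p₁) (hp₂ : 1 ≤ p₂) (hpp : p₂ ≤ p₁) (hq : 2 ≤ q)
    (x y : ℚ) (hx : 0 < x) (hy : 0 < y) (hxy : x ≤ y)
    (h1 : x * ((p₁ : ℚ) + 1) = y * ((p₂ : ℚ) + 1))
    (h2 : y * ((p₂ : ℚ) + 1) = (1 - 1 / (q : ℚ)) * (x * (p₁ : ℚ) + y * (p₂ : ℚ))) :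
    3 ≤ q ∧
      (q = 3 → ((p₂ = 2 ∧ p₁ = 5 ∧ y = 2 * x) ∨ (p₂ = 3 ∧ p₁ = 3 ∧ y = x))) ∧
      (4 ≤ q → (p₂ : ℚ) ≤ (q : ℚ) / ((q : ℚ) - 2)) := by
  have hqQ : (2:ℚ) ≤ (q:ℚ) := by exact_mod_cast hq
  have hq0 : (q:ℚ) ≠ 0 := by linarith
  have h2' : y * ((p₂:ℚ) + 1) * q = ((q:ℚ) - 1) * (x * p₁ + y * p₂) := by
    field_simp at h2
    linarith [h2]
  have key : ((q:ℚ) - 2) * (y * p₂) = y + ((q:ℚ) - 1) * x := by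
    linear_combination -h2' - ((q:ℚ) - 1) * h1
  have hq3 : 3 ≤ q := by
    by_contra h
    have : q = 2 := by omega
    subst this
    norm_num at key
    nlinarith
  refine ⟨hq3, ?_, ?_⟩
  · intro hq3'
    subst hq3'
    norm_num at key
    -- key : y * p₂ = y + 2 * x  (check actual form)
    have hp2lb : (2:ℤ) ≤ p₂ := by
      by_contra h
      have : p₂ = 1 := by omega
      subst this
      norm_num at key
      nlinarith
    have hp2ub : p₂ ≤ 3 := by
      by_contra h
      have h4 : (4:ℚ) ≤ (p₂:ℚ) := by exact_mod_cast (by omega : (4:ℤ) ≤ p₂)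
      nlinarith
    interval_cases p₂
    · left
      have hyx : y = 2 * x := by
        push_cast at key; linarith
      refine ⟨rfl, ?_, hyx⟩
      rw [hyx] at h1
      push_cast at h1
      have : (p₁:ℚ) = 5 := by nlinarith
      exact_mod_cast this
    · right
      have hyx : y = x := by
        push_cast at key; linarith
      refine ⟨rfl, ?_, hyx⟩
      rw [hyx] at h1
      push_cast at h1
      have : (p₁:ℚ) = 3 := by nlinarith
      exact_mod_cast this
  · intro hq4
    have hq4Q : (4:ℚ) ≤ (q:ℚ) := by exact_mod_cast hq4
    rw [le_div_iff₀ (by linarith : (0:ℚ) < (q:ℚ) - 2)]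
    nlinarith
end

section
/- Let ν ≠ 0, k ≠ 0, and A⁰₁ = diag(0,−ν), A¹₀ = [[−α, k],[α(γ−α)/k, α−γ]]. Define C⁰ to be the space of pairs (C₁, C₀) of 2×2 matrices with A⁰₁C₁ = C₁A⁰₁ and A⁰₁C₀ − C₀A⁰₁ + A⁰₀C₁ − C₁A⁰₀ = 0 where A⁰₀ = −A¹₀, and C¹ = Z(A¹₀) the centralizer of A¹₀. Then dim C⁰ = 4, dim C¹ = 2, and the index of rigidity idx(A) = dim C⁰ + dim C¹ − 2·2² equals 2. -/
open Matrix

/-!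
`A⁰₁ = diag(0, -ν)` has distinct eigenvalues, so everything commuting with it is diagonal. Hence
`C₁` is diagonal, `[A⁰₀, C₁]` has zero diagonal, and the equation `[A⁰₁, C₀] = [C₁, A⁰₀]` fixes the
off-diagonal entries of `C₀` and leaves its diagonal free: `dim C⁰ = 2n = 4`. Since the
`(0,1)`-entry `k` of `A¹₀` is nonzero, a matrix commuting with `A¹₀` is determined by its first row,
and every first row is attained by some `a + b A¹₀`: `dim Z(A¹₀) = 2`.
-/

namespace Matrix

variable {n R K : Type*} [Fintype n]

/-- The pairs `(C₁, C₀)` such that `C₁ + C₀ t` commutes with `A₁ + A₀ t` in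
`Matrix n n (R[t]/(t²))`. -/
def truncatedCentralizer [CommRing R] (A₁ A₀ : Matrix n n R) :
    Submodule R (Matrix n n R × Matrix n n R) where
  carrier := {p | A₁ * p.1 = p.1 * A₁ ∧ A₁ * p.2 - p.2 * A₁ + A₀ * p.1 - p.1 * A₀ = 0}
  add_mem' := by
    rintro ⟨a₁, a₀⟩ ⟨b₁, b₀⟩ ⟨ha₁, ha₀⟩ ⟨hb₁, hb₀⟩
    refine ⟨by simp only [Prod.fst_add, mul_add, add_mul, ha₁, hb₁], ?_⟩
    dsimp only at ha₀ hb₀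
    calc A₁ * (a₀ + b₀) - (a₀ + b₀) * A₁ + A₀ * (a₁ + b₁) - (a₁ + b₁) * A₀
        = (A₁ * a₀ - a₀ * A₁ + A₀ * a₁ - a₁ * A₀) + (A₁ * b₀ - b₀ * A₁ + A₀ * b₁ - b₁ * A₀) := by
          simp only [mul_add, add_mul]
          abel
      _ = 0 := by rw [ha₀, hb₀, add_zero]
  zero_mem' := by simp
  smul_mem' := by
    rintro c ⟨a₁, a₀⟩ ⟨ha₁, ha₀⟩
    refine ⟨by simp only [Prod.smul_fst, Matrix.mul_smul, Matrix.smul_mul, ha₁], ?_⟩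
    simp only [Prod.smul_fst, Prod.smul_snd, Matrix.mul_smul, Matrix.smul_mul]
    rw [← smul_sub, ← smul_add, ← smul_sub, ha₀, smul_zero]

variable [DecidableEq n]

theorem diagonal_mul_sub_mul_diagonal_apply [CommRing R] (d : n → R) (M : Matrix n n R)
    (i j : n) :
    (diagonal d * M - M * diagonal d) i j = (d i - d j) * M i j := by
  simp only [sub_apply, diagonal_mul, mul_diagonal]
  ring

theorem eq_diagonal_diag_of_commute_diagonal [Field K] {d : n → K} (hd : Function.Injective d)
    {M : Matrix n n K} (hM : diagonal d * M = M * diagonal d) : M = diagonal M.diag := by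
  ext i j
  rcases eq_or_ne i j with rfl | hij
  · simp
  · have := diagonal_mul_sub_mul_diagonal_apply d M i j
    rw [hM, sub_self, zero_apply, eq_comm, mul_eq_zero] at this
    simpa [diagonal_apply_ne _ hij] using this.resolve_left (sub_ne_zero.2 (hd.ne hij))

variable [Field K] {d : n → K}

theorem eq_zero_of_mem_truncatedCentralizer_diagonal (hd : Function.Injective d) {B : Matrix n n K}
    {p : Matrix n n K × Matrix n n K} (hp : p ∈ truncatedCentralizer (diagonal d) B)
    (h₁ : p.1.diag = 0) (h₀ : p.2.diag = 0) : p = 0 := by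
  obtain ⟨hp₁, hp₀⟩ := hp
  have hC₁ : p.1 = 0 := by rw [eq_diagonal_diag_of_commute_diagonal hd hp₁, h₁]; exact diagonal_zero
  rw [hC₁, mul_zero, zero_mul, sub_zero, add_zero, sub_eq_zero] at hp₀
  have hC₀ : p.2 = 0 := by rw [eq_diagonal_diag_of_commute_diagonal hd hp₀, h₀]; exact diagonal_zero
  exact Prod.ext hC₁ hC₀

theorem finrank_truncatedCentralizer_diagonal (hd : Function.Injective d) (B : Matrix n n K) :
    Module.finrank K (truncatedCentralizer (diagonal d) B) = 2 * Fintype.card n := by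
  let diags : truncatedCentralizer (diagonal d) B →ₗ[K] (n → K) × (n → K) :=
    ((diagLinearMap n K K).prodMap (diagLinearMap n K K)).comp (Submodule.subtype _)
  have hinj : Function.Injective diags := by
    refine (injective_iff_map_eq_zero diags).2 fun p hp => ?_
    rw [Prod.ext_iff] at hp
    exact Subtype.ext (eq_zero_of_mem_truncatedCentralizer_diagonal hd p.2 hp.1 hp.2)
  have hsurj : Function.Surjective diags := by
    rintro ⟨u, v⟩
    refine ⟨⟨(diagonal u, diagonal v + of fun i j => (u i - u j) * B i j / (d i - d j)),
      (commute_diagonal d u).eq, ?_⟩, ?_⟩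
    · -- entry `(i, j)` of the second condition reads `(d i - d j) C₀ i j = (u i - u j) B i j`
      ext i j
      dsimp only
      rw [sub_apply, add_apply, diagonal_mul_sub_mul_diagonal_apply, diagonal_mul, mul_diagonal,
        add_apply, of_apply, zero_apply]
      rcases eq_or_ne i j with rfl | hij
      · ring
      · have : d i - d j ≠ 0 := sub_ne_zero.2 (hd.ne hij)
        rw [diagonal_apply_ne _ hij]
        field_simp
        ring
    · ext i <;> simp [diags]
  rw [(LinearEquiv.ofBijective diags ⟨hinj, hsurj⟩).finrank_eq, Module.finrank_prod,
    Module.finrank_fintype_fun_eq_card, two_mul]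

end Matrix

theorem eq_zero_of_mem_matrixCentralizer_of_firstRow_eq_zero {X Y : Matrix (Fin 2) (Fin 2) ℂ}
    (hX : X 0 1 ≠ 0) (hY : Y ∈ matrixCentralizer X) (h₀₀ : Y 0 0 = 0) (h₀₁ : Y 0 1 = 0) :
    Y = 0 := by
  have e₀₀ := congrFun (congrFun hY 0) 0
  have e₀₁ := congrFun (congrFun hY 0) 1
  simp only [mul_apply, Fin.sum_univ_two, h₀₀, h₀₁, mul_zero, zero_mul, zero_add, add_zero]
    at e₀₀ e₀₁
  have h₁₀ : Y 1 0 = 0 := (mul_eq_zero.1 e₀₀).resolve_left hX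
  have h₁₁ : Y 1 1 = 0 := (mul_eq_zero.1 e₀₁).resolve_left hX
  ext i j
  fin_cases i <;> fin_cases j <;> assumption

theorem finrank_matrixCentralizer_fin_two {X : Matrix (Fin 2) (Fin 2) ℂ} (hX : X 0 1 ≠ 0) :
    Module.finrank ℂ (matrixCentralizer X) = 2 := by
  let firstRow : matrixCentralizer X →ₗ[ℂ] ℂ × ℂ :=
    ((entryLinearMap ℂ ℂ 0 0).prod (entryLinearMap ℂ ℂ 0 1)).comp (Submodule.subtype _)
  have hinj : Function.Injective firstRow := by
    refine (injective_iff_map_eq_zero firstRow).2 fun Y hY => ?_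
    rw [Prod.ext_iff] at hY
    exact Subtype.ext (eq_zero_of_mem_matrixCentralizer_of_firstRow_eq_zero hX Y.2 hY.1 hY.2)
  have hsurj : Function.Surjective firstRow := by
    rintro ⟨a, b⟩
    refine ⟨⟨(b / X 0 1) • X + (a - b * X 0 0 / X 0 1) • 1,
      ((Commute.refl X).smul_right _).add_right ((Commute.one_right X).smul_right _)⟩, ?_⟩
    ext
    · simp [firstRow, div_mul_eq_mul_div]
    · simp [firstRow, hX]
  rw [(LinearEquiv.ofBijective firstRow ⟨hinj, hsurj⟩).finrank_eq, Module.finrank_prod,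
    Module.finrank_self]

theorem chg_index_of_rigidity_general (ν γ α k : ℂ) (hν : ν ≠ 0) (hk : k ≠ 0)
    (A01 A10 A00 : Matrix (Fin 2) (Fin 2) ℂ)
    (hA01 : A01 = !![0, 0; 0, -ν])
    (hA10 : A10 = !![-α, k; α * (γ - α) / k, α - γ])
    (C0 : Submodule ℂ (Matrix (Fin 2) (Fin 2) ℂ × Matrix (Fin 2) (Fin 2) ℂ))
    (hC0 : (C0 : Set (Matrix (Fin 2) (Fin 2) ℂ × Matrix (Fin 2) (Fin 2) ℂ)) =
      {p : Matrix (Fin 2) (Fin 2) ℂ × Matrix (Fin 2) (Fin 2) ℂ |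
        A01 * p.1 = p.1 * A01 ∧ A01 * p.2 - p.2 * A01 + A00 * p.1 - p.1 * A00 = 0}) :
    Module.finrank ℂ C0 = 4 ∧
      Module.finrank ℂ (matrixCentralizer A10) = 2 ∧
      (Module.finrank ℂ C0 : ℤ) + (Module.finrank ℂ (matrixCentralizer A10) : ℤ)
        - (2 - 1) * 2 ^ 2 = 2 := by
  have hA01_diag : A01 = diagonal ![0, -ν] := by
    rw [hA01]
    ext i j
    fin_cases i <;> fin_cases j <;> rfl
  have hinj : Function.Injective ![0, -ν] :=
    Fin.cons_injective_iff.2 ⟨by simpa using hν, Function.injective_of_subsingleton _⟩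
  have hC0_eq : C0 = truncatedCentralizer (diagonal ![0, -ν]) A00 :=
    SetLike.coe_injective (by rw [hC0, hA01_diag]; rfl)
  have hdim₀ : Module.finrank ℂ C0 = 4 := by
    rw [hC0_eq, finrank_truncatedCentralizer_diagonal hinj, Fintype.card_fin]
  have hdim₁ : Module.finrank ℂ (matrixCentralizer A10) = 2 :=
    finrank_matrixCentralizer_fin_two (by rw [hA10]; exact hk)
  refine ⟨hdim₀, hdim₁, ?_⟩
  rw [hdim₀, hdim₁]
  norm_num

/-- Index of rigidity of the confluent hypergeometric system:
`dim C⁰ = 4`, `dim C¹ = 2`, and `idx = dim C⁰ + dim C¹ − (M−1)n² = 2`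
(with `M = 2`, `n = 2`). -/
theorem chg_index_of_rigidity (ν γ α k : ℂ) (hν : ν ≠ 0) (hk : k ≠ 0)
    (A01 A10 A00 : Matrix (Fin 2) (Fin 2) ℂ)
    (hA01 : A01 = !![0, 0; 0, -ν])
    (hA10 : A10 = !![-α, k; α * (γ - α) / k, α - γ])
    (hA00 : A00 = -A10)
    (C0 : Submodule ℂ (Matrix (Fin 2) (Fin 2) ℂ × Matrix (Fin 2) (Fin 2) ℂ))
    (hC0 : (C0 : Set (Matrix (Fin 2) (Fin 2) ℂ × Matrix (Fin 2) (Fin 2) ℂ)) =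
      {p : Matrix (Fin 2) (Fin 2) ℂ × Matrix (Fin 2) (Fin 2) ℂ |
        A01 * p.1 = p.1 * A01 ∧ A01 * p.2 - p.2 * A01 + A00 * p.1 - p.1 * A00 = 0}) :
    Module.finrank ℂ C0 = 4 ∧
      Module.finrank ℂ (matrixCentralizer A10) = 2 ∧
      (Module.finrank ℂ C0 : ℤ) + (Module.finrank ℂ (matrixCentralizer A10) : ℤ)
        - (2 - 1) * 2 ^ 2 = 2 :=
  chg_index_of_rigidity_general ν γ α k hν hk A01 A10 A00 hA01 hA10 C0 hC0
end
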